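/- For a subset A of an Abelian group G the following statements are equivalent: (1) A is complemented; (2) A is a kaleidoscopical configuration in G; (3) A is a homogeneous kaleidoscopical configuration in G, i.e. A is a kaleidoscopical configuration and there exist a G[A]-transversal T and a subset H ⊆ G such that G is the disjoint union of the family {hT : h ∈ H}. -/
import Mathlib


open Pointwise

universe u

/-- `G = AB` is a factorization of the group `G`. -/
def IsFactorization {G : Type u} [Group G] (A B : Set G) : Prop :=
  Function.Bijective (fun p : A × B => (p.1 : G) * (p.2 : G))

/-- `A` is a kaleidoscopical configuration in the group `G` with the left regular
action. -/
def IsKaleidoscopical {G : Type u} [Group G] (A : Set G) : Prop :=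
  ∃ (C : Type u) (χ : G → C), Function.Surjective χ ∧
    ∀ g : G, Set.BijOn χ (g • A) Set.univ

/-- `A` is a homogeneous kaleidoscopical configuration: `A` is kaleidoscopical and there
are a `G[A]`-transversal `T` and a set `H ⊆ G` such that `G` is the disjoint union of the
family `{hT : h ∈ H}`. -/
def IsHomogeneousKaleidoscopical {G : Type u} [Group G] (A : Set G) : Prop :=
  IsKaleidoscopical A ∧
    ∃ T H : Set G, (∀ g : G, ∃! x, x ∈ (g • A) ∩ T) ∧
      (∀ x : G, ∃! h, h ∈ H ∧ x ∈ h • T)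

/-- `T` is a `G[A]`-transversal iff `G = A·T⁻¹` is a factorization. -/
lemma transversal_iff_factorization {G : Type u} [Group G] (A T : Set G) :
    (∀ g : G, ∃! x, x ∈ (g • A) ∩ T) ↔ IsFactorization A T⁻¹ := by
  constructor
  · intro hT
    constructor
    · rintro ⟨⟨a₁, ha₁⟩, ⟨t₁, ht₁⟩⟩ ⟨⟨a₂, ha₂⟩, ⟨t₂, ht₂⟩⟩ h
    
      simp only at h
      set g : G := a₁ * t₁ with hg
      have hmem : ∀ (a t : G), a ∈ A → t ∈ T⁻¹ → a * t = g →
          t⁻¹ ∈ (g⁻¹ • A) ∩ T := by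
        intro a t ha ht heq
        refine ⟨⟨a, ha, ?_⟩, Set.mem_inv.mp ht⟩
        have : t = a⁻¹ * g := by rw [← heq]; group
        rw [this]; simp [smul_eq_mul]
      have h1 := hmem a₁ t₁ ha₁ ht₁ rfl
      have h2 := hmem a₂ t₂ ha₂ ht₂ h.symm
      have ht : t₁⁻¹ = t₂⁻¹ := (hT g⁻¹).unique h1 h2
      have ht' : t₁ = t₂ := by rw [← inv_inv t₁, ht, inv_inv]
      have ha : a₁ = a₂ := by
        have h'' : a₁ * t₁ = a₂ * t₂ := h
        rw [ht'] at h''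
        exact mul_right_cancel h''
      simp [Prod.ext_iff, Subtype.ext_iff, ha, ht']
    · intro g
      obtain ⟨x, ⟨⟨a, ha, hax⟩, hxT⟩, -⟩ := hT g⁻¹
      refine ⟨⟨⟨a, ha⟩, ⟨x⁻¹, by simp [Set.mem_inv, hxT]⟩⟩, ?_⟩
      simp only [smul_eq_mul] at hax
      simp only []
      rw [← hax]; group
  · rintro ⟨hinj, hsurj⟩ g
    obtain ⟨⟨⟨a, ha⟩, ⟨t, ht⟩⟩, hp⟩ := hsurj g⁻¹
    simp only at hp
    refine ⟨t⁻¹, ⟨⟨a, ha, ?_⟩, Set.mem_inv.mp ht⟩, ?_⟩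
    · have : t = a⁻¹ * g⁻¹ := by rw [← hp]; group
      rw [this]; simp [smul_eq_mul]
    · rintro y ⟨⟨b, hb, hby⟩, hyT⟩
      simp only [smul_eq_mul] at hby
      have : (fun p : A × ↥T⁻¹ => (p.1 : G) * (p.2 : G))
          (⟨b, hb⟩, ⟨y⁻¹, Set.mem_inv.mpr (by simpa using hyT)⟩) =
          (fun p : A × ↥T⁻¹ => (p.1 : G) * (p.2 : G)) (⟨a, ha⟩, ⟨t, ht⟩) := by
        simp only [hp]
        rw [← hby]; group
      have := hinj this
      have h2 : y⁻¹ = t := congrArg (fun q => ((Prod.snd q : ↥T⁻¹) : G)) this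
      rw [← h2, inv_inv]

/-- A transversal plus a partition by translates yields a kaleidoscopical coloring. -/
lemma kaleidoscopical_of_data {G : Type u} [Group G] (A T H : Set G)
    (hT : ∀ g : G, ∃! x, x ∈ (g • A) ∩ T)
    (hH : ∀ x : G, ∃! h, h ∈ H ∧ x ∈ h • T) :
    IsKaleidoscopical A := by
  classical
  have hchoice : ∀ x : G, ∃ h : ↥H, x ∈ (h : G) • T := by
    intro x
    obtain ⟨h, ⟨hh, hx⟩, -⟩ := hH x
    exact ⟨⟨h, hh⟩, hx⟩
  let χ : G → ↥H := fun x => (hchoice x).choose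
  have hχ : ∀ x : G, x ∈ ((χ x : G)) • T := fun x => (hchoice x).choose_spec
  have hχu : ∀ (x : G) (h : ↥H), x ∈ (h : G) • T → χ x = h := by
    intro x h hx
    have := (hH x).unique ⟨(χ x).2, hχ x⟩ ⟨h.2, hx⟩
    exact Subtype.ext this
  -- T is nonempty
  obtain ⟨t₀, ⟨-, ht₀⟩, -⟩ := hT 1
  refine ⟨↥H, χ, ?_, ?_⟩
  · rintro ⟨h, hh⟩
    refine ⟨h * t₀, hχu _ ⟨h, hh⟩ ⟨t₀, ht₀, rfl⟩⟩
  · intro g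
    refine ⟨fun x _ => trivial, ?_, ?_⟩
    · rintro x hx y hy hxy
      set h : G := (χ x : G) with hh
      have hyh : y ∈ h • T := by rw [hh, hxy]; exact hχ y
      have key : ∀ z : G, z ∈ g • A → z ∈ h • T → h⁻¹ * z ∈ ((h⁻¹ * g) • A) ∩ T := by
        rintro z ⟨a, ha, haz⟩ ⟨t, ht, htz⟩
        constructor
        · exact ⟨a, ha, by simp only [smul_eq_mul] at haz ⊢; rw [← haz]; group⟩
        · simp only [smul_eq_mul] at htz
          have : h⁻¹ * z = t := by rw [← htz]; group
          rw [this]; exact ht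
      have := (hT (h⁻¹ * g)).unique (key x hx (hχ x)) (key y hy hyh)
      exact mul_left_cancel this
    · rintro ⟨h, hh⟩ -
      obtain ⟨x, ⟨⟨a, ha, hax⟩, hxT⟩, -⟩ := hT (h⁻¹ * g)
      refine ⟨h * x, ⟨a, ha, ?_⟩, ?_⟩
      · simp only [smul_eq_mul] at hax ⊢
        rw [← hax]; group
      · exact hχu _ ⟨h, hh⟩ ⟨x, hxT, rfl⟩

lemma homogeneous_of_factorization {G : Type u} [CommGroup G] (A B : Set G)
    (hf : IsFactorization A B) :
    (∀ g : G, ∃! x, x ∈ (g • A) ∩ B⁻¹) ∧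
      (∀ x : G, ∃! h, h ∈ A⁻¹ ∧ x ∈ h • B⁻¹) := by
  obtain ⟨hinj, hsurj⟩ := hf
  constructor
  · rw [transversal_iff_factorization]
    rw [inv_inv]
    exact ⟨hinj, hsurj⟩
  · intro x
    obtain ⟨⟨⟨a, ha⟩, ⟨b, hb⟩⟩, hp⟩ := hsurj x⁻¹
    simp only at hp
    refine ⟨a⁻¹, ⟨Set.inv_mem_inv.mpr ha, ⟨b⁻¹, Set.inv_mem_inv.mpr hb, ?_⟩⟩, ?_⟩
    · simp only [smul_eq_mul]
      have : a⁻¹ * b⁻¹ = (a * b)⁻¹ := by rw [mul_inv_rev, mul_comm]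
      rw [this, hp, inv_inv]
    · rintro h ⟨hhA, ⟨t, htB, htx⟩⟩
      simp only [smul_eq_mul] at htx
      have hxinv : x⁻¹ = h⁻¹ * t⁻¹ := by rw [← htx, mul_inv_rev, mul_comm]
      have : (fun p : A × B => (p.1 : G) * (p.2 : G))
          (⟨h⁻¹, Set.mem_inv.mp hhA⟩, ⟨t⁻¹, Set.mem_inv.mp htB⟩) =
          (fun p : A × B => (p.1 : G) * (p.2 : G)) (⟨a, ha⟩, ⟨b, hb⟩) := by
        simp only [hp]
        rw [← hxinv]
      have h2 : h⁻¹ = a := congrArg (fun q => ((Prod.fst q : ↥A) : G)) (hinj this)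
      rw [← h2, inv_inv]

/-- For a subset `A` of an Abelian group `G` the following are equivalent:
(1) `A` is complemented; (2) `A` is a kaleidoscopical configuration;
(3) `A` is a homogeneous kaleidoscopical configuration. -/
theorem stmt4 {G : Type u} [CommGroup G] (A : Set G) :
    ((∃ B : Set G, IsFactorization A B) ↔ IsKaleidoscopical A) ∧
    (IsKaleidoscopical A ↔ IsHomogeneousKaleidoscopical A) := by
  have h13 : (∃ B : Set G, IsFactorization A B) → IsHomogeneousKaleidoscopical A := by
    rintro ⟨B, hB⟩
    obtain ⟨hT, hH⟩ := homogeneous_of_factorization A B hB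
    exact ⟨kaleidoscopical_of_data A B⁻¹ A⁻¹ hT hH, B⁻¹, A⁻¹, hT, hH⟩
  have h21 : IsKaleidoscopical A → ∃ B : Set G, IsFactorization A B := by
    rintro ⟨C, χ, hsurj, hbij⟩
    set T : Set G := χ ⁻¹' {χ 1} with hTdef
    refine ⟨T⁻¹, (transversal_iff_factorization A T).mp ?_⟩
    intro g
    obtain ⟨x, hxA, hxc⟩ := (hbij g).surjOn (Set.mem_univ (χ 1))
    refine ⟨x, ⟨hxA, hxc⟩, ?_⟩
    rintro y ⟨hyA, hyc⟩
    exact (hbij g).injOn hyA hxA ((Set.mem_singleton_iff.mp hyc).trans hxc.symm)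
  exact ⟨⟨fun h => (h13 h).1, h21⟩, fun h => h13 (h21 h), fun h => h.1⟩
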